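/- Let W be a valid n-partite process matrix on (H_I ⊗ H_O)^{⊗n}, each party having input space H_I and output space H_O, and let R be the map defined in the context. Then W^inv = (1/n!)·R(W) is a valid n-partite process matrix on the extended spaces in which party k has input H_I ⊗ ℂ^n and output H_O ⊗ H_{R_O}. -/

import Mathlib

open Matrix ComplexOrder

/-- Tensor product `M_1 ⊗ … ⊗ M_n` of a family of square matrices, realised on the
product index type. -/
noncomputable def tensorAll {n : ℕ} {γ : Fin n → Type} [∀ k, Fintype (γ k)]
    (M : ∀ k, Matrix (γ k) (γ k) ℂ) : Matrix (∀ k, γ k) (∀ k, γ k) ℂ :=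
  Matrix.of fun f f' => ∏ k, M k (f k) (f' k)

/-- Partial trace over the second (output) tensor factor. -/
noncomputable def ptraceOut {α β : Type} [Fintype β]
    (M : Matrix (α × β) (α × β) ℂ) : Matrix α α ℂ :=
  Matrix.of fun a a' => ∑ b, M (a, b) (a', b)

/-- A valid `n`-partite process matrix on `⨂_k (H_{I_k} ⊗ H_{O_k})`: a positive
semidefinite operator `W` such that `Tr[W·(M_1 ⊗ … ⊗ M_n)] = 1` for every choice of
positive semidefinite `M_k` with `Tr_{O_k}[M_k] = 1_{I_k}` (Choi matrices of CPTP maps). -/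
def IsProcessMatrix {n : ℕ} {ι κ : Fin n → Type}
    [∀ k, Fintype (ι k)] [∀ k, Fintype (κ k)] [∀ k, DecidableEq (ι k)]
    (W : Matrix (∀ k, ι k × κ k) (∀ k, ι k × κ k) ℂ) : Prop :=
  W.PosSemidef ∧
    ∀ M : ∀ k, Matrix (ι k × κ k) (ι k × κ k) ℂ,
      (∀ k, (M k).PosSemidef) → (∀ k, ptraceOut (M k) = 1) →
        (W * tensorAll M).trace = 1

/-- The operator `W ⊗ [01…(n−1)]^{R_I} ⊗ 1^{R_O}` with tensor factors reordered so that
party `k` carries input `H_I ⊗ ℂ^n` (basis `Fin dI × Fin n`) and output `H_O ⊗ H_{R_O}`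
(basis `Fin dO × Fin dR`).  `[01…(n−1)]` is the rank-one projector onto
`|0⟩⊗|1⟩⊗…⊗|n−1⟩` in `(ℂ^n)^{⊗n}`. -/
noncomputable def extendW (n dI dO dR : ℕ)
    (A : Matrix (Fin n → Fin dI × Fin dO) (Fin n → Fin dI × Fin dO) ℂ) :
    Matrix (Fin n → (Fin dI × Fin n) × (Fin dO × Fin dR))
      (Fin n → (Fin dI × Fin n) × (Fin dO × Fin dR)) ℂ :=
  Matrix.of fun f f' =>
    A (fun k => ((f k).1.1, (f k).2.1)) (fun k => ((f' k).1.1, (f' k).2.1)) *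
      (if (∀ k, (f k).1.2 = k) ∧ (∀ k, (f' k).1.2 = k) then 1 else 0) *
      (if (fun k => (f k).2.2) = (fun k => (f' k).2.2) then 1 else 0)

/-- The unitary `U_g^{SR}` jointly permuting, according to `g ∈ S_n`, the `n` extended
party factors (each carrying the system factor `H_I ⊗ H_O` together with its reference
factor `ℂ^n ⊗ H_{R_O}`). -/
noncomputable def permSR (n dI dO dR : ℕ) (g : Equiv.Perm (Fin n)) :
    Matrix (Fin n → (Fin dI × Fin n) × (Fin dO × Fin dR))
      (Fin n → (Fin dI × Fin n) × (Fin dO × Fin dR)) ℂ :=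
  Matrix.of fun p q => if q = p ∘ g then 1 else 0

/-- `R(A) = Σ_{g ∈ S_n} U_g^{SR} (A ⊗ [01…(n−1)]^{R_I} ⊗ 1^{R_O}) (U_g^{SR})†`. -/
noncomputable def Rmap (n dI dO dR : ℕ)
    (A : Matrix (Fin n → Fin dI × Fin dO) (Fin n → Fin dI × Fin dO) ℂ) :
    Matrix (Fin n → (Fin dI × Fin n) × (Fin dO × Fin dR))
      (Fin n → (Fin dI × Fin n) × (Fin dO × Fin dR)) ℂ :=
  ∑ g : Equiv.Perm (Fin n),
    permSR n dI dO dR g * extendW n dI dO dR A * (permSR n dI dO dR g)ᴴ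

/-!
Conjugation by `U_g^{SR}` only relabels the parties, so pairing the `g`-th term of `R(W)` with a
product `M_1 ⊗ … ⊗ M_n` of Choi matrices of CPTP maps is the same as pairing the `g = 1` term with
the permuted product. That term is `Σ_r V_r W V_r†` for the isometries
`V_r : |p⟩ ↦ |p⟩ ⊗ |01…(n−1)⟩ ⊗ |r⟩`, hence positive, and its pairing with `⊗_k M_k` equals the
pairing of `W` with `⊗_k M_k'`, where `M_k'` is obtained from `M_k` by feeding `|k⟩` into the
reference input and tracing out the reference output. Each `M_k'` is again the Choi matrix of a
CPTP map, so each of the `n!` terms contributes `1`.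
-/

namespace Matrix

variable {α β R : Type*} [Fintype β]

lemma conjTranspose_submatrix_one_mul_mul [DecidableEq β] [Semiring R] [StarRing R] (e : α → β)
    (A : Matrix β β R) :
    ((1 : Matrix β β R).submatrix id e)ᴴ * A * (1 : Matrix β β R).submatrix id e
      = A.submatrix e e := by
  have h₁ := one_submatrix_mul e (Equiv.refl β) A
  have h₂ := mul_submatrix_one (Equiv.refl β) e (A.submatrix e id)
  simp only [Equiv.coe_refl, Equiv.refl_symm, Function.id_comp] at h₁ h₂
  rw [conjTranspose_submatrix, conjTranspose_one, h₁, h₂, submatrix_submatrix]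
  rfl

lemma trace_submatrix_one_mul_mul_conjTranspose_mul [DecidableEq β] [Fintype α]
    [CommSemiring R] [StarRing R] (e : α → β) (A : Matrix α α R) (T : Matrix β β R) :
    ((1 : Matrix β β R).submatrix id e * A * ((1 : Matrix β β R).submatrix id e)ᴴ * T).trace
      = (A * T.submatrix e e).trace := by
  rw [← conjTranspose_submatrix_one_mul_mul, Matrix.mul_assoc, Matrix.mul_assoc, trace_mul_comm]
  simp only [Matrix.mul_assoc]

lemma trace_submatrix_equiv_mul [Fintype α] [CommSemiring R] (e : α ≃ β) (A : Matrix β β R)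
    (B : Matrix α α R) :
    (A.submatrix e e * B).trace = (A * B.submatrix e.symm e.symm).trace := by
  conv_lhs => rw [← submatrix_id_id B, ← e.symm_comp_self, ← submatrix_submatrix,
    submatrix_mul_equiv]
  exact e.sum_comp fun b => (A * B.submatrix e.symm e.symm) b b

end Matrix

lemma ptraceOut_eq_sum_submatrix {α β : Type} [Fintype β] (M : Matrix (α × β) (α × β) ℂ) :
    ptraceOut M = ∑ b, M.submatrix (·, b) (·, b) := by
  ext a a'
  simp [ptraceOut, Matrix.sum_apply]

lemma Matrix.PosSemidef.ptraceOut {α β : Type} [Fintype α] [Fintype β]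
    {M : Matrix (α × β) (α × β) ℂ} (hM : M.PosSemidef) : (ptraceOut M).PosSemidef := by
  rw [ptraceOut_eq_sum_submatrix]
  exact posSemidef_sum _ fun b _ => hM.submatrix _

lemma tensorAll_submatrix_comp_perm {n : ℕ} {γ : Type} [Fintype γ] (M : Fin n → Matrix γ γ ℂ)
    (g : Equiv.Perm (Fin n)) :
    (tensorAll M).submatrix (· ∘ g.symm) (· ∘ g.symm) = tensorAll fun k => M (g k) := by
  ext f f'
  exact (Equiv.prod_comp g fun k => M k (f (g.symm k)) (f' (g.symm k))).symm.trans
    (by simp [tensorAll])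

section Reference

variable {n dI dO dR : ℕ}

def embedRef (r : Fin n → Fin dR) (p : Fin n → Fin dI × Fin dO) :
    Fin n → (Fin dI × Fin n) × (Fin dO × Fin dR) :=
  fun k => (((p k).1, k), ((p k).2, r k))

lemma eq_embedRef_iff (r : Fin n → Fin dR) (p : Fin n → Fin dI × Fin dO)
    (f : Fin n → (Fin dI × Fin n) × (Fin dO × Fin dR)) :
    f = embedRef r p ↔
      p = (fun k => ((f k).1.1, (f k).2.1)) ∧ (∀ k, (f k).1.2 = k) ∧ (fun k => (f k).2.2) = r := by
  simp only [embedRef, funext_iff, Prod.ext_iff]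
  grind

/-- The isometry `|p⟩ ↦ |p⟩ ⊗ |01…(n−1)⟩^{R_I} ⊗ |r⟩^{R_O}`. -/
noncomputable def refIsometry (dI dO : ℕ) (r : Fin n → Fin dR) :
    Matrix (Fin n → (Fin dI × Fin n) × (Fin dO × Fin dR)) (Fin n → Fin dI × Fin dO) ℂ :=
  (1 : Matrix _ _ ℂ).submatrix id (embedRef r)

lemma extendW_eq_sum (A : Matrix (Fin n → Fin dI × Fin dO) (Fin n → Fin dI × Fin dO) ℂ) :
    extendW n dI dO dR A
      = ∑ r : Fin n → Fin dR, refIsometry dI dO r * A * (refIsometry dI dO r)ᴴ := by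
  ext f f'
  simp only [extendW, of_apply, Matrix.sum_apply, mul_apply, refIsometry, conjTranspose_apply,
    submatrix_apply, one_apply, id_eq, eq_embedRef_iff, ite_and, apply_ite star, star_one,
    star_zero, mul_ite, ite_mul, mul_one, one_mul, mul_zero, zero_mul, Finset.sum_ite_eq',
    Finset.sum_ite_eq, Finset.mem_univ, if_true, Finset.sum_ite_irrel, Finset.sum_const_zero]
  split_ifs <;> rfl

lemma Matrix.PosSemidef.extendW
    {A : Matrix (Fin n → Fin dI × Fin dO) (Fin n → Fin dI × Fin dO) ℂ}
    (hA : A.PosSemidef) : (extendW n dI dO dR A).PosSemidef := by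
  rw [extendW_eq_sum]
  exact posSemidef_sum _ fun r _ => hA.mul_mul_conjTranspose_same _

lemma trace_extendW_mul (A : Matrix (Fin n → Fin dI × Fin dO) (Fin n → Fin dI × Fin dO) ℂ)
    (T : Matrix (Fin n → (Fin dI × Fin n) × (Fin dO × Fin dR))
      (Fin n → (Fin dI × Fin n) × (Fin dO × Fin dR)) ℂ) :
    (extendW n dI dO dR A * T).trace
      = (A * ∑ r : Fin n → Fin dR, T.submatrix (embedRef r) (embedRef r)).trace := by
  simp only [extendW_eq_sum, Finset.sum_mul, Matrix.mul_sum, trace_sum, refIsometry,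
    trace_submatrix_one_mul_mul_conjTranspose_mul]

noncomputable def restrictRef
    (N : Matrix ((Fin dI × Fin n) × (Fin dO × Fin dR)) ((Fin dI × Fin n) × (Fin dO × Fin dR)) ℂ)
    (j : Fin n) : Matrix (Fin dI × Fin dO) (Fin dI × Fin dO) ℂ :=
  ptraceOut (N.submatrix (fun q : (Fin dI × Fin dO) × Fin dR => ((q.1.1, j), (q.1.2, q.2)))
    (fun q => ((q.1.1, j), (q.1.2, q.2))))

lemma Matrix.PosSemidef.restrictRef
    {N : Matrix ((Fin dI × Fin n) × (Fin dO × Fin dR)) ((Fin dI × Fin n) × (Fin dO × Fin dR)) ℂ}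
    (hN : N.PosSemidef) (j : Fin n) : (restrictRef N j).PosSemidef :=
  (hN.submatrix _).ptraceOut

lemma ptraceOut_restrictRef
    (N : Matrix ((Fin dI × Fin n) × (Fin dO × Fin dR)) ((Fin dI × Fin n) × (Fin dO × Fin dR)) ℂ)
    (j : Fin n) : ptraceOut (restrictRef N j) = (ptraceOut N).submatrix (·, j) (·, j) := by
  ext a a'
  simp [ptraceOut, restrictRef, Fintype.sum_prod_type]

lemma ptraceOut_restrictRef_eq_one
    {N : Matrix ((Fin dI × Fin n) × (Fin dO × Fin dR)) ((Fin dI × Fin n) × (Fin dO × Fin dR)) ℂ}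
    (hN : ptraceOut N = 1) (j : Fin n) : ptraceOut (restrictRef N j) = 1 := by
  rw [ptraceOut_restrictRef, hN, submatrix_one _ (Prod.mk_left_injective j)]

lemma sum_tensorAll_submatrix_embedRef
    (N : Fin n → Matrix ((Fin dI × Fin n) × (Fin dO × Fin dR))
      ((Fin dI × Fin n) × (Fin dO × Fin dR)) ℂ) :
    ∑ r : Fin n → Fin dR, (tensorAll N).submatrix (embedRef r) (embedRef r)
      = tensorAll fun k => restrictRef (N k) k := by
  ext p p'
  simp only [Matrix.sum_apply, submatrix_apply, tensorAll, of_apply, restrictRef, ptraceOut,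
    embedRef]
  exact (Fintype.prod_sum fun k (v : Fin dR) =>
    N k (((p k).1, k), ((p k).2, v)) (((p' k).1, k), ((p' k).2, v))).symm

lemma permSR_mul_mul_conjTranspose (g : Equiv.Perm (Fin n))
    (A : Matrix (Fin n → (Fin dI × Fin n) × (Fin dO × Fin dR))
      (Fin n → (Fin dI × Fin n) × (Fin dO × Fin dR)) ℂ) :
    permSR n dI dO dR g * A * (permSR n dI dO dR g)ᴴ = A.submatrix (· ∘ g) (· ∘ g) := by
  have : permSR n dI dO dR g = ((1 : Matrix _ _ ℂ).submatrix id (· ∘ g))ᴴ := by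
    ext p q
    simp [permSR, one_apply]
  rw [this, conjTranspose_conjTranspose, conjTranspose_submatrix_one_mul_mul]

lemma trace_permSR_conj_extendW_mul_tensorAll (g : Equiv.Perm (Fin n))
    (A : Matrix (Fin n → Fin dI × Fin dO) (Fin n → Fin dI × Fin dO) ℂ)
    (M : Fin n → Matrix ((Fin dI × Fin n) × (Fin dO × Fin dR))
      ((Fin dI × Fin n) × (Fin dO × Fin dR)) ℂ) :
    (permSR n dI dO dR g * extendW n dI dO dR A * (permSR n dI dO dR g)ᴴ * tensorAll M).trace
      = (A * tensorAll fun k => restrictRef (M (g k)) k).trace := by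
  rw [permSR_mul_mul_conjTranspose]
  calc _ = (extendW n dI dO dR A * (tensorAll M).submatrix (· ∘ g.symm) (· ∘ g.symm)).trace :=
        trace_submatrix_equiv_mul (Equiv.arrowCongr g.symm (Equiv.refl _)) _ _
    _ = _ := by
      rw [tensorAll_submatrix_comp_perm, trace_extendW_mul, sum_tensorAll_submatrix_embedRef]

end Reference

/-- if `W` is a valid `n`-partite process matrix on `(H_I ⊗ H_O)^{⊗n}`,
then `W^inv = (1/n!)·R(W)` is a valid `n`-partite process matrix on the extended spaces
in which party `k` has input `H_I ⊗ ℂ^n` and output `H_O ⊗ H_{R_O}`. -/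
theorem invariant_process_is_process (n dI dO dR : ℕ)
    (W : Matrix (Fin n → Fin dI × Fin dO) (Fin n → Fin dI × Fin dO) ℂ)
    (hW : IsProcessMatrix (ι := fun _ => Fin dI) (κ := fun _ => Fin dO) W) :
    IsProcessMatrix (ι := fun _ => Fin dI × Fin n) (κ := fun _ => Fin dO × Fin dR)
      (((n.factorial : ℂ))⁻¹ • Rmap n dI dO dR W) := by
  refine ⟨(posSemidef_sum _ fun g _ => ?_).smul (inv_nonneg.2 (Nat.cast_nonneg _)),
    fun M hM hM₁ => ?_⟩
  · rw [permSR_mul_mul_conjTranspose]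
    exact hW.1.extendW.submatrix _
  · have hterm (g : Equiv.Perm (Fin n)) : (permSR n dI dO dR g * extendW n dI dO dR W *
        (permSR n dI dO dR g)ᴴ * tensorAll M).trace = 1 := by
      rw [trace_permSR_conj_extendW_mul_tensorAll]
      exact hW.2 _ (fun k => (hM (g k)).restrictRef k)
        (fun k => ptraceOut_restrictRef_eq_one (hM₁ (g k)) k)
    rw [smul_mul, trace_smul, Rmap, Finset.sum_mul, trace_sum,
      Finset.sum_congr rfl fun g _ => hterm g]
    simp [Fintype.card_perm, Nat.factorial_ne_zero]
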